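/- Let V be a real four-dimensional oriented inner product space, with induced inner product and Hodge star on Λ²V, so that Λ²V = Λ⁺ ⊕ Λ⁻ splits into self-dual and anti-self-dual parts, and let dvol ∈ Λ⁴V be the volume element. Let θ ∈ Λ⁺ satisfy θ ∧ θ = dvol, and let ρ₁, ρ₂ ∈ Λ²V satisfy ρᵢ ∧ ρᵢ = dvol and ρᵢ⁺ = λᵢ θ with λᵢ ≥ 1 for i = 1,2. Then (ρ₁ − ρ₂) ∧ (ρ₁ − ρ₂) ≤ 0 (i.e. it is a nonpositive multiple of dvol), and (ρ₁ − ρ₂) ∧ (ρ₁ − ρ₂) = 0 if and only if ρ₁ = ρ₂. -/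

import Mathlib

/-!
Write `ρᵢ = lᵢ θ + σᵢ` with `σᵢ` anti-self-dual. Since `⋆` is self-adjoint, `Λ⁺ ⊥ Λ⁻`
and the wedge form is `(a, σ) ↦ a² - ‖σ‖²` on `ℝθ ⊕ Λ⁻`, so the `(lᵢ, σᵢ)` lie on the
upper sheet of the unit hyperboloid of a Minkowski space. Chords of that sheet are
spacelike: the reverse Cauchy–Schwarz inequality `l₁ l₂ - ⟪σ₁, σ₂⟫ ≥ 1` holds, with
equality only at coinciding points.
-/

open RealInnerProductSpace

lemma sq_mul_sub_one_sub_sq_mul {a b p q : ℝ}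
    (hp : a ^ 2 - p ^ 2 = 1) (hq : b ^ 2 - q ^ 2 = 1) :
    (a * b - 1) ^ 2 - (p * q) ^ 2 = (a - b) ^ 2 := by
  rw [mul_pow, show p ^ 2 = a ^ 2 - 1 by linarith, show q ^ 2 = b ^ 2 - 1 by linarith]
  ring

lemma mul_le_mul_sub_one_of_sq_sub_sq_eq_one {a b p q : ℝ} (ha : 0 ≤ a) (hb : 0 ≤ b)
    (hp : a ^ 2 - p ^ 2 = 1) (hq : b ^ 2 - q ^ 2 = 1) :
    p * q ≤ a * b - 1 := by
  have ha1 : 1 ≤ a := by nlinarith [sq_nonneg p]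
  have hb1 : 1 ≤ b := by nlinarith [sq_nonneg q]
  refine le_of_sq_le_sq ?_ (by nlinarith)
  linarith [sq_mul_sub_one_sub_sq_mul hp hq, sq_nonneg (a - b)]

section Hyperboloid

variable {E : Type*} [NormedAddCommGroup E] [InnerProductSpace ℝ E] {a b : ℝ} {x y : E}

lemma sq_sub_sub_norm_sub_sq (hx : a ^ 2 - ‖x‖ ^ 2 = 1) (hy : b ^ 2 - ‖y‖ ^ 2 = 1) :
    (a - b) ^ 2 - ‖x - y‖ ^ 2 = 2 * (1 - (a * b - ⟪x, y⟫)) := by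
  rw [norm_sub_sq_real]
  linear_combination hx + hy

lemma one_le_mul_sub_inner (ha : 0 ≤ a) (hb : 0 ≤ b)
    (hx : a ^ 2 - ‖x‖ ^ 2 = 1) (hy : b ^ 2 - ‖y‖ ^ 2 = 1) :
    1 ≤ a * b - ⟪x, y⟫ := by
  linarith [real_inner_le_norm x y, mul_le_mul_sub_one_of_sq_sub_sq_eq_one ha hb hx hy]

lemma eq_of_mul_sub_inner_eq_one (ha : 0 ≤ a) (hb : 0 ≤ b)
    (hx : a ^ 2 - ‖x‖ ^ 2 = 1) (hy : b ^ 2 - ‖y‖ ^ 2 = 1) (h : a * b - ⟪x, y⟫ = 1) :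
    a = b := by
  have hle := mul_le_mul_sub_one_of_sq_sub_sq_eq_one ha hb hx hy
  have heq : ‖x‖ * ‖y‖ = a * b - 1 := le_antisymm hle (by linarith [real_inner_le_norm x y])
  have hsq : (a - b) ^ 2 = 0 := by rw [← sq_mul_sub_one_sub_sq_mul hx hy, heq, sub_self]
  exact sub_eq_zero.mp (pow_eq_zero_iff two_ne_zero |>.mp hsq)

theorem hyperboloid_chord_nonpos (ha : 0 ≤ a) (hb : 0 ≤ b)
    (hx : a ^ 2 - ‖x‖ ^ 2 = 1) (hy : b ^ 2 - ‖y‖ ^ 2 = 1) :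
    (a - b) ^ 2 - ‖x - y‖ ^ 2 ≤ 0 := by
  rw [sq_sub_sub_norm_sub_sq hx hy]
  linarith [one_le_mul_sub_inner ha hb hx hy]

theorem hyperboloid_chord_eq_zero (ha : 0 ≤ a) (hb : 0 ≤ b)
    (hx : a ^ 2 - ‖x‖ ^ 2 = 1) (hy : b ^ 2 - ‖y‖ ^ 2 = 1)
    (h : (a - b) ^ 2 - ‖x - y‖ ^ 2 = 0) :
    a = b ∧ x = y := by
  have hab : a = b := eq_of_mul_sub_inner_eq_one ha hb hx hy (by
    rw [sq_sub_sub_norm_sub_sq hx hy] at h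
    linarith)
  subst hab
  refine ⟨rfl, sub_eq_zero.mp (norm_eq_zero.mp (pow_eq_zero_iff two_ne_zero |>.mp ?_))⟩
  linarith

end Hyperboloid

namespace LinearMap.IsSymmetric

variable {W : Type*} [NormedAddCommGroup W] [InnerProductSpace ℝ W] {T : W →ₗ[ℝ] W}
  {θ σ : W}

lemma inner_eq_zero_of_apply_eq_neg (hT : T.IsSymmetric) (hθ : T θ = θ) (hσ : T σ = -σ) :
    ⟪θ, σ⟫ = 0 := by
  have h := hT θ σ
  rw [hθ, hσ, inner_neg_right] at h
  linarith

lemma inner_smul_add_apply_smul_add (hT : T.IsSymmetric) (hθ : T θ = θ) (hσ : T σ = -σ)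
    (c : ℝ) :
    ⟪c • θ + σ, T (c • θ + σ)⟫ = c ^ 2 * ‖θ‖ ^ 2 - ‖σ‖ ^ 2 := by
  have hθσ := hT.inner_eq_zero_of_apply_eq_neg hθ hσ
  rw [map_add, map_smul, hθ, hσ, inner_add_left, inner_add_right, inner_add_right,
    real_inner_smul_left, real_inner_smul_left, real_inner_smul_right, inner_neg_right,
    inner_neg_right, real_inner_smul_right, real_inner_comm θ σ, hθσ,
    real_inner_self_eq_norm_sq, real_inner_self_eq_norm_sq]
  ring

end LinearMap.IsSymmetric

lemma LinearMap.apply_sub_smul_eq_neg {W : Type*} [AddCommGroup W] [Module ℝ W]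
    {T : W →ₗ[ℝ] W} {θ ρ : W} {c : ℝ} (hθ : T θ = θ)
    (hρ : (2⁻¹ : ℝ) • (ρ + T ρ) = c • θ) :
    T (ρ - c • θ) = -(ρ - c • θ) := by
  rw [map_sub, map_smul, hθ]
  linear_combination (norm := module) (2 : ℝ) • hρ

/-- `W` models `Λ²V`, `star` the Hodge star and `w α β = ⟪α, star β⟫` the wedge pairing
in units of `dvol`; the self-dual part of `ω` is `2⁻¹ • (ω + star ω)`. -/
theorem negative_chords_general
    (W : Type*) [NormedAddCommGroup W] [InnerProductSpace ℝ W]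
    (star : W →ₗ[ℝ] W)
    (hsa : ∀ α β : W, (inner ℝ (star α) β : ℝ) = (inner ℝ α (star β) : ℝ))
    (w : W → W → ℝ)
    (hw : ∀ α β : W, w α β = (inner ℝ α (star β) : ℝ))
    (θ ρ₁ ρ₂ : W) (l₁ l₂ : ℝ)
    (hθsd : star θ = θ) (hθ : w θ θ = 1)
    (h₁ : w ρ₁ ρ₁ = 1) (h₂ : w ρ₂ ρ₂ = 1)
    (hp₁ : (2⁻¹ : ℝ) • (ρ₁ + star ρ₁) = l₁ • θ) (hl₁ : 1 ≤ l₁)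
    (hp₂ : (2⁻¹ : ℝ) • (ρ₂ + star ρ₂) = l₂ • θ) (hl₂ : 1 ≤ l₂) :
    w (ρ₁ - ρ₂) (ρ₁ - ρ₂) ≤ 0 ∧
      (w (ρ₁ - ρ₂) (ρ₁ - ρ₂) = 0 ↔ ρ₁ = ρ₂) := by
  have hsym : star.IsSymmetric := hsa
  have hθnorm : ‖θ‖ ^ 2 = 1 := by rwa [hw, hθsd, real_inner_self_eq_norm_sq] at hθ
  have hwedge (c : ℝ) {σ : W} (hσ : star σ = -σ) :
      w (c • θ + σ) (c • θ + σ) = c ^ 2 - ‖σ‖ ^ 2 := by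
    rw [hw, hsym.inner_smul_add_apply_smul_add hθsd hσ, hθnorm, mul_one]
  set σ₁ := ρ₁ - l₁ • θ
  set σ₂ := ρ₂ - l₂ • θ
  have hσ₁ : star σ₁ = -σ₁ := LinearMap.apply_sub_smul_eq_neg hθsd hp₁
  have hσ₂ : star σ₂ = -σ₂ := LinearMap.apply_sub_smul_eq_neg hθsd hp₂
  have hρ₁ : ρ₁ = l₁ • θ + σ₁ := by simp [σ₁]
  have hρ₂ : ρ₂ = l₂ • θ + σ₂ := by simp [σ₂]
  have hx : l₁ ^ 2 - ‖σ₁‖ ^ 2 = 1 := by rw [← hwedge l₁ hσ₁, ← hρ₁, h₁]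
  have hy : l₂ ^ 2 - ‖σ₂‖ ^ 2 = 1 := by rw [← hwedge l₂ hσ₂, ← hρ₂, h₂]
  have hchord : w (ρ₁ - ρ₂) (ρ₁ - ρ₂) = (l₁ - l₂) ^ 2 - ‖σ₁ - σ₂‖ ^ 2 := by
    rw [← hwedge (l₁ - l₂) (by rw [map_sub, hσ₁, hσ₂, neg_sub_neg, neg_sub]),
      sub_smul, hρ₁, hρ₂]
    abel_nf
  have ha : 0 ≤ l₁ := by linarith
  have hb : 0 ≤ l₂ := by linarith
  refine ⟨hchord ▸ hyperboloid_chord_nonpos ha hb hx hy, fun h ↦ ?_, fun h ↦ ?_⟩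
  · obtain ⟨hl, hσ⟩ := hyperboloid_chord_eq_zero ha hb hx hy (hchord ▸ h)
    rw [hρ₁, hρ₂, hl, hσ]
  · rw [h, sub_self, hw, map_zero, inner_zero_left]

/-- **Negative chords** (Lemma 2.2).  `W` plays the role of `Λ²V` for a real
four-dimensional oriented inner product space `V` (so `W` is six-dimensional),
`star` is the Hodge star operator on `Λ²V` (a self-adjoint involution, whose
`±1` eigenspaces are the self-dual and anti-self-dual forms), and `w α β` is
the wedge product `α ∧ β` measured in multiples of the volume element
`dvol ∈ Λ⁴V`, i.e. `α ∧ β = w α β · dvol`; it satisfies `w α β = ⟨α, star β⟩`.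
The self-dual part of `ω` is `ω⁺ = (ω + star ω)/2`.
If `θ ∈ Λ⁺` satisfies `θ ∧ θ = dvol` and `ρ₁, ρ₂ ∈ Λ²V` satisfy
`ρᵢ ∧ ρᵢ = dvol` and `ρᵢ⁺ = λᵢ θ` with `λᵢ ≥ 1`, then
`(ρ₁ − ρ₂) ∧ (ρ₁ − ρ₂) ≤ 0`, with equality if and only if `ρ₁ = ρ₂`. -/
theorem negative_chords
    (W : Type*) [NormedAddCommGroup W] [InnerProductSpace ℝ W]
    (hdim : Module.finrank ℝ W = 6)
    (star : W →ₗ[ℝ] W)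
    (hinv : ∀ ω, star (star ω) = ω)
    (hsa : ∀ α β : W, (inner ℝ (star α) β : ℝ) = (inner ℝ α (star β) : ℝ))
    (w : W → W → ℝ)
    (hw : ∀ α β : W, w α β = (inner ℝ α (star β) : ℝ))
    (θ ρ₁ ρ₂ : W) (l₁ l₂ : ℝ)
    (hθsd : star θ = θ) (hθ : w θ θ = 1)
    (h₁ : w ρ₁ ρ₁ = 1) (h₂ : w ρ₂ ρ₂ = 1)
    (hp₁ : (2⁻¹ : ℝ) • (ρ₁ + star ρ₁) = l₁ • θ) (hl₁ : 1 ≤ l₁)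
    (hp₂ : (2⁻¹ : ℝ) • (ρ₂ + star ρ₂) = l₂ • θ) (hl₂ : 1 ≤ l₂) :
    w (ρ₁ - ρ₂) (ρ₁ - ρ₂) ≤ 0 ∧
      (w (ρ₁ - ρ₂) (ρ₁ - ρ₂) = 0 ↔ ρ₁ = ρ₂) :=
  negative_chords_general W star hsa w hw θ ρ₁ ρ₂ l₁ l₂ hθsd hθ h₁ h₂ hp₁ hl₁ hp₂ hl₂
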